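/- arXiv:2407.15530 — 5 statements merged into one kernel-verified Lean document; each statement's English description precedes it below -/
import Mathlib

section
/- Under the stated assumptions, the self-ambiguity and cross-ambiguity parts are uncorrelated: E[χ_s(τ,ν) · conj(χ_c(τ,ν))] = 0. -/
/-!
Expanding both sums, `E[χ_s · conj χ_c]` is a linear combination of the moments
`E[|s_k|² · conj s_n · s_m]` with `n ≠ m`. Each such monomial is a product over the indices `j`
of one-variable factors `f_j(s_j)` of degree at most three, so independence turns its
expectation into the product of the `E[f_j(s_j)]`, and the third moments make every factor, hence
the product, integrable. One factor is a lone `s_m` (if `m ≠ k`) or `conj s_n` (if `m = k`, so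
`n ≠ k`), whose mean vanishes.
-/

open MeasureTheory ProbabilityTheory Complex

/-- The cross-ambiguity function between the `n`-th and `m`-th time-shifted pulses:
`ψ_{n,m}(τ,ν) = exp(−2πi·n·ν·T) · ψ(τ + (m−n)·T, ν)`. -/
noncomputable def psiNM (ψ : ℝ × ℝ → ℂ) (T τ ν : ℝ) (n m : ℕ) : ℂ :=
  Complex.exp (-2 * Real.pi * Complex.I * n * ν * T) * ψ (τ + ((m : ℝ) - n) * T, ν)

/-- The self-ambiguity part `χ_s(τ,ν) = Σ_n |s_n|² ψ_{n,n}(τ,ν)`. -/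
noncomputable def chiS {Ω : Type*} (L : ℕ) (ψ : ℝ × ℝ → ℂ) (T τ ν : ℝ)
    (s : Fin L → Ω → ℂ) (ω : Ω) : ℂ :=
  ∑ n : Fin L, (Complex.ofReal ‖s n ω‖) ^ 2 * psiNM ψ T τ ν n n

/-- The cross-ambiguity part `χ_c(τ,ν) = Σ_n Σ_{m ≠ n} s_n conj(s_m) ψ_{n,m}(τ,ν)`. -/
noncomputable def chiC {Ω : Type*} (L : ℕ) (ψ : ℝ × ℝ → ℂ) (T τ ν : ℝ)
    (s : Fin L → Ω → ℂ) (ω : Ω) : ℂ :=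
  ∑ n : Fin L, ∑ m ∈ Finset.univ.erase n,
    s n ω * (starRingEnd ℂ) (s m ω) * psiNM ψ T τ ν n m

theorem pow_le_one_add_pow {x : ℝ} (hx : 0 ≤ x) {d n : ℕ} (hdn : d ≤ n) : x ^ d ≤ 1 + x ^ n := by
  rcases le_total x 1 with h | h
  · linarith [pow_le_one₀ hx h (n := d), pow_nonneg hx n]
  · linarith [pow_le_pow_right₀ h hdn]

namespace ProbabilityTheory

variable {Ω 𝕜 ι : Type*} [RCLike 𝕜] {mΩ : MeasurableSpace Ω} {μ : Measure Ω}

theorem iIndepFun.integrable_fun_prod [Fintype ι] {X : ι → Ω → 𝕜} (hX : iIndepFun X μ)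
    (hmeas : ∀ i, Measurable (X i)) (hint : ∀ i, Integrable (X i) μ) :
    Integrable (fun ω ↦ ∏ i, X i ω) μ := by
  refine ⟨(Finset.measurable_fun_prod _ fun i _ ↦ hmeas i).aestronglyMeasurable, ?_⟩
  have hnorm : iIndepFun (fun i ω ↦ ‖X i ω‖ₑ) μ :=
    hX.comp (fun _ ↦ enorm) fun _ ↦ measurable_enorm
  simp only [HasFiniteIntegral, enorm_eq_nnnorm, nnnorm_prod, ENNReal.ofNNReal_finsetProd]
  simp only [← enorm_eq_nnnorm]
  rw [lintegral_prod_eq_prod_lintegral_of_indepFun _ _ hnorm fun i ↦ (hmeas i).enorm]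
  exact ENNReal.prod_lt_top fun i _ ↦ (hint i).2

end ProbabilityTheory

namespace MeasureTheory

variable {Ω E : Type*} {mΩ : MeasurableSpace Ω} [NormedAddCommGroup E] [NormedSpace ℂ E]

def meanZero (μ : Measure Ω) : Submodule ℂ (Ω → E) where
  carrier := {f | Integrable f μ ∧ ∫ ω, f ω ∂μ = 0}
  add_mem' := fun ⟨hf, hf0⟩ ⟨hg, hg0⟩ ↦ ⟨hf.add hg, by simp [integral_add hf hg, hf0, hg0]⟩
  zero_mem' := ⟨integrable_zero _ _ _, integral_zero _ _⟩
  smul_mem' := fun c _ ⟨hf, hf0⟩ ↦ ⟨hf.smul c, by simp [integral_smul, hf0]⟩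

end MeasureTheory

section NormSqConjMul

variable {ι : Type*} [DecidableEq ι]

noncomputable def normSqConjMulFactor (k n m j : ι) (z : ℂ) : ℂ :=
  (if j = k then (‖z‖ : ℂ) ^ 2 else 1) * (if j = n then starRingEnd ℂ z else 1) *
    (if j = m then z else 1)

theorem prod_normSqConjMulFactor [Fintype ι] (k n m : ι) (x : ι → ℂ) :
    ∏ j, normSqConjMulFactor k n m j (x j) = (‖x k‖ : ℂ) ^ 2 * starRingEnd ℂ (x n) * x m := by
  simp only [normSqConjMulFactor, Finset.prod_mul_distrib, Finset.prod_ite_eq', Finset.mem_univ,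
    if_true]

theorem measurable_normSqConjMulFactor (k n m j : ι) :
    Measurable (normSqConjMulFactor k n m j) := by
  unfold normSqConjMulFactor
  split_ifs <;> fun_prop

theorem norm_normSqConjMulFactor_le {n m : ι} (hnm : n ≠ m) (k j : ι) (z : ℂ) :
    ‖normSqConjMulFactor k n m j z‖ ≤ 1 + ‖z‖ ^ 3 := by
  have h0 : (1 : ℝ) ≤ 1 + ‖z‖ ^ 3 := le_add_of_nonneg_right (by positivity)
  have h1 : ‖z‖ ≤ 1 + ‖z‖ ^ 3 :=
    (pow_one ‖z‖).symm.trans_le (pow_le_one_add_pow (norm_nonneg z) (by norm_num))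
  have h2 : ‖z‖ ^ 2 ≤ 1 + ‖z‖ ^ 3 := pow_le_one_add_pow (norm_nonneg z) (by norm_num)
  have h3 : ‖z‖ ^ 3 ≤ 1 + ‖z‖ ^ 3 := le_add_of_nonneg_left zero_le_one
  unfold normSqConjMulFactor
  split_ifs <;> simp_all [← pow_succ]

variable [Fintype ι] {Ω : Type*} {mΩ : MeasurableSpace Ω} {μ : Measure Ω} {s : ι → Ω → ℂ}

theorem normSqConjMul_mem_meanZero (hindep : iIndepFun s μ) (hmeas : ∀ i, Measurable (s i))
    (hmean : ∀ i, ∫ ω, s i ω ∂μ = 0) (hmom3 : ∀ i, Integrable (fun ω ↦ ‖s i ω‖ ^ 3) μ)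
    (k : ι) {n m : ι} (hnm : n ≠ m) :
    (fun ω ↦ (‖s k ω‖ : ℂ) ^ 2 * starRingEnd ℂ (s n ω) * s m ω) ∈ meanZero μ := by
  have := hindep.isProbabilityMeasure
  set F : ι → Ω → ℂ := fun j ω ↦ normSqConjMulFactor k n m j (s j ω) with hF_def
  have hF : iIndepFun F μ := hindep.comp _ (measurable_normSqConjMulFactor k n m)
  have hFmeas : ∀ j, Measurable (F j) :=
    fun j ↦ (measurable_normSqConjMulFactor k n m j).comp (hmeas j)
  have hFint : ∀ j, Integrable (F j) μ := fun j ↦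
    ((integrable_const 1).add (hmom3 j)).mono' (hFmeas j).aestronglyMeasurable
      (ae_of_all _ fun ω ↦ norm_normSqConjMulFactor_le hnm k j (s j ω))
  have hF_zero : ∃ j, ∫ ω, F j ω ∂μ = 0 := by
    by_cases hmk : m = k
    · refine ⟨n, ?_⟩
      simp only [hF_def, normSqConjMulFactor, if_neg (hmk ▸ hnm), if_neg hnm, if_true, one_mul,
        mul_one, integral_conj, hmean, map_zero]
    · refine ⟨m, ?_⟩
      simp only [hF_def, normSqConjMulFactor, if_neg hmk, if_neg hnm.symm, if_true, one_mul, hmean]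
  obtain ⟨j, hj⟩ := hF_zero
  have hprod : (fun ω ↦ (‖s k ω‖ : ℂ) ^ 2 * starRingEnd ℂ (s n ω) * s m ω) = fun ω ↦ ∏ j, F j ω :=
    funext fun ω ↦ (prod_normSqConjMulFactor k n m (s · ω)).symm
  rw [hprod]
  exact ⟨hF.integrable_fun_prod hFmeas hFint, by
    rw [hF.integral_fun_prod_eq_prod_integral fun i ↦ (hFint i).1]
    exact Finset.prod_eq_zero (Finset.mem_univ j) hj⟩

end NormSqConjMul

theorem chiS_mul_conj_chiC_eq_sum {Ω : Type*} (L : ℕ) (ψ : ℝ × ℝ → ℂ) (T τ ν : ℝ)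
    (s : Fin L → Ω → ℂ) :
    (fun ω ↦ chiS L ψ T τ ν s ω * starRingEnd ℂ (chiC L ψ T τ ν s ω)) =
      ∑ k : Fin L, ∑ n : Fin L, ∑ m ∈ Finset.univ.erase n,
        (psiNM ψ T τ ν k k * starRingEnd ℂ (psiNM ψ T τ ν n m)) •
          fun ω ↦ (‖s k ω‖ : ℂ) ^ 2 * starRingEnd ℂ (s n ω) * s m ω := by
  funext ω
  simp only [chiS, chiC, map_sum, Finset.sum_mul, Finset.sum_apply]
  refine Finset.sum_congr rfl fun k _ ↦ ?_
  simp only [Finset.mul_sum]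
  refine Finset.sum_congr rfl fun n _ ↦ Finset.sum_congr rfl fun m _ ↦ ?_
  simp only [map_mul, conj_conj, Pi.smul_apply, smul_eq_mul]
  ring

theorem self_cross_ambiguity_uncorrelated_general
    {Ω : Type*} [MeasureSpace Ω]
    (L : ℕ) (T : ℝ) (τ ν : ℝ)
    (ψ : ℝ × ℝ → ℂ) (s : Fin L → Ω → ℂ)
    (hmeas : ∀ n : Fin L, Measurable (s n))
    (hindep : iIndepFun s ℙ)
    (hmean : ∀ n : Fin L, ∫ ω, s n ω ∂ℙ = 0)
    (hmom3 : ∀ n : Fin L, Integrable (fun ω => ‖s n ω‖ ^ 3) ℙ) :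
    (∫ ω, chiS L ψ T τ ν s ω * (starRingEnd ℂ) (chiC L ψ T τ ν s ω) ∂ℙ) = 0 := by
  suffices h : (fun ω ↦ chiS L ψ T τ ν s ω * starRingEnd ℂ (chiC L ψ T τ ν s ω)) ∈
      meanZero (ℙ : Measure Ω) from h.2
  rw [chiS_mul_conj_chiC_eq_sum]
  exact Submodule.sum_mem _ fun k _ ↦ Submodule.sum_mem _ fun n _ ↦
    Submodule.sum_mem _ fun m hm ↦ Submodule.smul_mem _ _ <|
      normSqConjMul_mem_meanZero hindep hmeas hmean hmom3 k (Finset.ne_of_mem_erase hm).symm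

/-- The self-ambiguity and cross-ambiguity parts are uncorrelated:
`E[χ_s(τ,ν) · conj(χ_c(τ,ν))] = 0`. -/
theorem self_cross_ambiguity_uncorrelated
    {Ω : Type*} [MeasureSpace Ω] [IsProbabilityMeasure (ℙ : Measure Ω)]
    (L : ℕ) (hL : 1 ≤ L) (T : ℝ) (hT : 0 < T) (τ ν : ℝ)
    (ψ : ℝ × ℝ → ℂ) (s : Fin L → Ω → ℂ)
    (hmeas : ∀ n : Fin L, Measurable (s n))
    (hindep : iIndepFun s ℙ)
    (hmean : ∀ n : Fin L, ∫ ω, s n ω ∂ℙ = 0)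
    (hmom3 : ∀ n : Fin L, Integrable (fun ω => ‖s n ω‖ ^ 3) ℙ) :
    (∫ ω, chiS L ψ T τ ν s ω * (starRingEnd ℂ) (chiC L ψ T τ ν s ω) ∂ℙ) = 0 :=
  self_cross_ambiguity_uncorrelated_general L T τ ν ψ s hmeas hindep hmean hmom3
end

section
/- Under the stated assumptions, the variance of the cross-ambiguity part satisfies Var(χ_c(τ,ν)) = Σ_{n=1}^{L−1} (L − n)·(|ψ(τ − nT, ν)|² + |ψ(τ + nT, ν)|²), i.e. Var(χ_c(τ,ν)) = Σ_{0 < |n| < L} (L − |n|)·|ψ(τ + nT, ν)|². -/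
open MeasureTheory ProbabilityTheory Complex

/-- The variance `Var(X) = E[|X|²] − |E[X]|²` of a complex random variable. -/
noncomputable def cVar {Ω : Type*} [MeasureSpace Ω] (X : Ω → ℂ) : ℝ :=
  (∫ ω, ‖X ω‖ ^ 2) - ‖∫ ω, X ω‖ ^ 2

/-! The products `s n * conj (s m)`, `n ≠ m`, are centred and orthonormal in `L²`: by
independence, `E[s a * conj (s b) * conj (s c * conj (s d))]` is a product of one-symbol moments
`E[s i ^ k * conj (s i) ^ l]` with `k + l ≤ 2`. These vanish unless `k = l` (for `k = 2, l = 0`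
because `E[s²] = 0`), and `k = l` at every index forces `(a, b) = (c, d)`. Hence
`Var χ_c = ∑_{n ≠ m} ‖ψ_{n,m}‖²`, where `‖ψ_{n,m}‖ = ‖ψ (τ + (m - n) T, ν)‖` depends only on the
lag `m - n`, which is taken by `L - |m - n|` pairs. -/

open scoped ComplexConjugate

section Orthonormal

variable {ι Ω : Type*} [DecidableEq ι] {X : ι → Ω → ℂ}

theorem integral_norm_sq_sum_mul_of_orthonormal {mΩ : MeasurableSpace Ω} {μ : Measure Ω}
    (S : Finset ι) (hX : ∀ i ∈ S, MemLp (X i) 2 μ)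
    (horth : ∀ i ∈ S, ∀ j ∈ S,
      ∫ ω, X i ω * conj (X j ω) ∂μ = if i = j then 1 else 0)
    (c : ι → ℂ) :
    ∫ ω, ‖∑ i ∈ S, X i ω * c i‖ ^ 2 ∂μ = ∑ i ∈ S, ‖c i‖ ^ 2 := by
  have hexpand : ∀ ω, ((‖∑ i ∈ S, X i ω * c i‖ ^ 2 : ℝ) : ℂ)
      = ∑ i ∈ S, ∑ j ∈ S, c i * conj (c j) * (X i ω * conj (X j ω)) := by
    intro ω
    rw [Complex.ofReal_pow, ← Complex.mul_conj', map_sum, Finset.sum_mul_sum]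
    refine Finset.sum_congr rfl fun i _ => Finset.sum_congr rfl fun j _ => ?_
    rw [map_mul]
    ring
  have hint : ∀ i ∈ S, ∀ j ∈ S, Integrable (fun ω => X i ω * conj (X j ω)) μ :=
    fun i hi j hj => (hX i hi).integrable_mul (hX j hj).star
  apply Complex.ofReal_injective
  rw [← integral_complex_ofReal, integral_congr_ae (.of_forall hexpand),
    integral_finsetSum _ fun i hi =>
      integrable_finsetSum _ fun j hj => (hint i hi j hj).const_mul _]
  push_cast
  refine Finset.sum_congr rfl fun i hi => ?_
  rw [integral_finsetSum _ fun j hj => (hint i hi j hj).const_mul _]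
  simp_rw [integral_const_mul]
  rw [Finset.sum_congr rfl fun j hj => by rw [horth i hi j hj, mul_ite, mul_one, mul_zero],
    Finset.sum_ite_eq, if_pos hi, Complex.mul_conj']

theorem cVar_sum_mul_of_orthonormal [MeasureSpace Ω] [IsFiniteMeasure (volume : Measure Ω)]
    (S : Finset ι) (hX : ∀ i ∈ S, MemLp (X i) 2) (hmean : ∀ i ∈ S, ∫ ω, X i ω = 0)
    (horth : ∀ i ∈ S, ∀ j ∈ S,
      ∫ ω, X i ω * conj (X j ω) = if i = j then 1 else 0)
    (c : ι → ℂ) :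
    cVar (fun ω => ∑ i ∈ S, X i ω * c i) = ∑ i ∈ S, ‖c i‖ ^ 2 := by
  have hmean_sum : ∫ ω, ∑ i ∈ S, X i ω * c i = 0 := by
    rw [integral_finsetSum _ fun i hi => ((hX i hi).integrable one_le_two).mul_const _]
    exact Finset.sum_eq_zero fun i hi => by rw [integral_mul_const, hmean i hi, zero_mul]
  rw [cVar, integral_norm_sq_sum_mul_of_orthonormal S hX horth, hmean_sum, norm_zero]
  ring

end Orthonormal

namespace ProbabilityTheory.iIndepFun

variable {ι Ω : Type*} {mΩ : MeasurableSpace Ω} {μ : Measure Ω} {s : ι → Ω → ℂ}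

theorem integral_mul_conj_eq_zero_of_ne (hs : iIndepFun s μ) (hmeas : ∀ i, Measurable (s i))
    (hmean : ∀ i, ∫ ω, s i ω ∂μ = 0) {a b : ι} (hab : a ≠ b) :
    ∫ ω, s a ω * conj (s b ω) ∂μ = 0 := by
  have hind : IndepFun (s a) (fun ω => conj (s b ω)) μ :=
    (hs.indepFun hab).comp measurable_id Complex.continuous_conj.measurable
  rw [hind.integral_fun_mul_eq_mul_integral (hmeas a).aestronglyMeasurable
    (Complex.continuous_conj.measurable.comp (hmeas b)).aestronglyMeasurable, hmean a, zero_mul]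

theorem memLp_two_mul_conj_of_ne (hs : iIndepFun s μ) (hL2 : ∀ i, MemLp (s i) 2 μ) {a b : ι}
    (hab : a ≠ b) : MemLp (fun ω => s a ω * conj (s b ω)) 2 μ := by
  have hsq : ∀ i, Integrable (fun ω => ‖s i ω‖ ^ 2) μ := fun i =>
    (memLp_two_iff_integrable_sq_norm (hL2 i).1).mp (hL2 i)
  have hind : IndepFun (fun ω => ‖s a ω‖ ^ 2) (fun ω => ‖s b ω‖ ^ 2) μ :=
    (hs.indepFun hab).comp (φ := fun z : ℂ => ‖z‖ ^ 2) (ψ := fun z : ℂ => ‖z‖ ^ 2)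
      (by fun_prop) (by fun_prop)
  refine (memLp_two_iff_integrable_sq_norm
    ((hL2 a).1.mul (Complex.continuous_conj.comp_aestronglyMeasurable (hL2 b).1))).mpr ?_
  refine (hind.integrable_mul (hsq a) (hsq b)).congr (.of_forall fun ω => ?_)
  simp [mul_pow]

variable [Fintype ι] [DecidableEq ι]

theorem integral_mul_conj_mul_conj_eq_prod (hs : iIndepFun s μ) (hmeas : ∀ i, Measurable (s i))
    (a b c d : ι) :
    ∫ ω, s a ω * conj (s b ω) * conj (s c ω * conj (s d ω)) ∂μ
      = ∏ i, ∫ ω, s i ω ^ ((if a = i then 1 else 0) + (if d = i then 1 else 0))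
          * conj (s i ω) ^ ((if b = i then 1 else 0) + (if c = i then 1 else 0)) ∂μ := by
  let k : ι → ℕ := fun i => (if a = i then 1 else 0) + (if d = i then 1 else 0)
  let l : ι → ℕ := fun i => (if b = i then 1 else 0) + (if c = i then 1 else 0)
  refine Eq.trans ?_ (hs.integral_fun_prod_comp (f := fun i z => z ^ k i * conj z ^ l i)
    (fun i => (hmeas i).aemeasurable) fun i => (by fun_prop : Continuous _).aestronglyMeasurable)
  refine integral_congr_ae (.of_forall fun ω => ?_)
  simp only [k, l, pow_add, Finset.prod_mul_distrib, Finset.prod_pow_boole, Finset.mem_univ,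
    if_true, map_mul, Complex.conj_conj]
  ring

theorem integral_mul_conj_mul_conj_eq_ite (hs : iIndepFun s μ) (hmeas : ∀ i, Measurable (s i))
    (hmean : ∀ i, ∫ ω, s i ω ∂μ = 0) (hpseudo : ∀ i, ∫ ω, s i ω ^ 2 ∂μ = 0)
    (hnorm : ∀ i, ∫ ω, ‖s i ω‖ ^ 2 ∂μ = 1) {a b c d : ι} (hab : a ≠ b) :
    ∫ ω, s a ω * conj (s b ω) * conj (s c ω * conj (s d ω)) ∂μ
      = if (a, b) = (c, d) then 1 else 0 := by
  have := hs.isProbabilityMeasure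
  have h11 : ∀ i, ∫ ω, s i ω ^ 1 * conj (s i ω) ^ 1 ∂μ = 1 := fun i => by
    simp only [pow_one, Complex.mul_conj', ← Complex.ofReal_pow, integral_complex_ofReal, hnorm,
      Complex.ofReal_one]
  have h10 : ∀ i, ∫ ω, s i ω ^ 1 * conj (s i ω) ^ 0 ∂μ = 0 := fun i => by simp [hmean]
  have h01 : ∀ i, ∫ ω, s i ω ^ 0 * conj (s i ω) ^ 1 ∂μ = 0 := fun i => by
    simp [integral_conj, hmean]
  have h20 : ∀ i, ∫ ω, s i ω ^ 2 * conj (s i ω) ^ 0 ∂μ = 0 := fun i => by simp [hpseudo]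
  rw [hs.integral_mul_conj_mul_conj_eq_prod hmeas]
  split_ifs with h
  · obtain ⟨rfl, rfl⟩ := Prod.ext_iff.mp h
    refine Finset.prod_eq_one fun i _ => ?_
    by_cases hai : a = i
    · subst hai; simpa [hab.symm] using h11 a
    by_cases hbi : b = i
    · subst hbi; simpa [hab] using h11 b
    simp [hai, hbi]
  -- Off the diagonal some factor is a lone `s i`, a lone `conj (s i)`, or `s a ^ 2`.
  by_cases hac : a = c
  · subst hac
    have hbd : b ≠ d := fun hbd => h (by rw [hbd])
    exact Finset.prod_eq_zero (Finset.mem_univ b) (by simpa [hab, hbd.symm] using h01 b)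
  by_cases had : a = d
  · subst had
    by_cases hbc : b = c
    · subst hbc
      exact Finset.prod_eq_zero (Finset.mem_univ a) (by simpa [hab.symm] using h20 a)
    exact Finset.prod_eq_zero (Finset.mem_univ b) (by simpa [hab, Ne.symm hbc] using h01 b)
  exact Finset.prod_eq_zero (Finset.mem_univ a)
    (by simpa [hab.symm, Ne.symm hac, Ne.symm had] using h10 a)

end ProbabilityTheory.iIndepFun

theorem Finset.sum_offDiag_eq_sum_sum_erase {α M : Type*} [DecidableEq α] [AddCommMonoid M]
    (s : Finset α) (g : α → α → M) :
    ∑ p ∈ s.offDiag, g p.1 p.2 = ∑ a ∈ s, ∑ b ∈ s.erase a, g a b :=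
  Finset.sum_finset_product _ _ _ fun p => by
    simp only [Finset.mem_offDiag, Finset.mem_erase]
    tauto

section Counting

open Finset

variable {R : Type*} [Ring R]

theorem sum_range_natCast_sub {M : Type*} [AddCommMonoid M] (F : ℤ → M) (L : ℕ) :
    ∑ n ∈ range L, F ((L : ℤ) - n) = ∑ k ∈ Ico 1 (L + 1), F k := by
  have h := sum_Ico_reflect (fun k : ℕ => F k) 0 L.le_succ
  rw [Nat.add_sub_cancel_left, Nat.sub_zero, ← range_eq_Ico] at h
  rw [← h]
  refine sum_congr rfl fun n hn => ?_
  rw [Nat.cast_sub (mem_range.mp hn).le]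

theorem sum_range_sum_range_sub (F : ℤ → R) (L : ℕ) :
    ∑ n ∈ range L, ∑ m ∈ range L, F ((m : ℤ) - n)
      = L * F 0 + ∑ k ∈ Ico 1 L, ((L : R) - k) * (F (-k) + F k) := by
  induction L with
  | zero => simp
  | succ L ih =>
    have hcol : ∑ m ∈ range L, F ((m : ℤ) - L) = ∑ k ∈ Ico 1 (L + 1), F (-k) := by
      simpa [neg_sub] using sum_range_natCast_sub (fun k => F (-k)) L
    have htop : ∑ k ∈ Ico 1 (L + 1), ((L : R) - k) * (F (-k) + F k)
        = ∑ k ∈ Ico 1 L, ((L : R) - k) * (F (-k) + F k) := by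
      refine (sum_subset (Ico_subset_Ico_right L.le_succ) fun k hk hk' => ?_).symm
      obtain rfl : k = L := by simp only [mem_Ico] at hk hk'; omega
      simp
    have hcoeff : ∑ k ∈ Ico 1 (L + 1), ((L + 1 : R) - k) * (F (-k) + F k)
        = ∑ k ∈ Ico 1 L, ((L : R) - k) * (F (-k) + F k)
          + ∑ k ∈ Ico 1 (L + 1), (F (-k) + F k) := by
      simp only [add_sub_right_comm _ (1 : R), add_one_mul, sum_add_distrib, htop]
    simp only [sum_range_succ, sum_add_distrib, ih, sub_self, hcol, sum_range_natCast_sub,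
      Nat.cast_succ, hcoeff, add_one_mul]
    abel

theorem sum_offDiag_fin_sub (F : ℤ → R) (L : ℕ) :
    ∑ p ∈ (univ : Finset (Fin L)).offDiag, F ((p.2 : ℕ) - (p.1 : ℕ))
      = ∑ k ∈ Ico 1 L, ((L : R) - k) * (F (-k) + F k) := by
  rw [sum_offDiag_eq_sum_sum_erase _ fun a b : Fin L => F ((b : ℕ) - (a : ℕ))]
  simp_rw [sum_erase_eq_sub (mem_univ _), sub_self]
  rw [sum_sub_distrib, Fin.sum_univ_eq_sum_range (fun n => ∑ m : Fin L, F ((m : ℕ) - (n : ℤ))),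
    sum_congr rfl fun (n : ℕ) _ => Fin.sum_univ_eq_sum_range (fun m => F ((m : ℤ) - n)) L,
    sum_range_sum_range_sub]
  simp

theorem sum_Ico_mul_add_eq_sum_erase_zero [LinearOrder R] [IsStrictOrderedRing R] (F : ℤ → R)
    (L : ℕ) :
    ∑ k ∈ Ico 1 L, ((L : R) - k) * (F (-k) + F k)
      = ∑ k ∈ (Ioo (-(L : ℤ)) L).erase 0, ((L : R) - |(k : R)|) * F k := by
  have hneg : ∑ k ∈ Ico 1 L, ((L : R) - k) * F (-k)
      = ∑ k ∈ Ioo (-(L : ℤ)) 0, ((L : R) - |(k : R)|) * F k := by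
    refine sum_nbij' (fun k : ℕ => -(k : ℤ)) (fun k => (-k).toNat) ?_ ?_ ?_ ?_ ?_ <;>
      intro k hk <;> simp only [mem_Ico, mem_Ioo] at hk ⊢
    all_goals first | omega | simp
  have hpos : ∑ k ∈ Ico 1 L, ((L : R) - k) * F k
      = ∑ k ∈ Ioo (0 : ℤ) L, ((L : R) - |(k : R)|) * F k := by
    refine sum_nbij' (fun k : ℕ => (k : ℤ)) (fun k => k.toNat) ?_ ?_ ?_ ?_ ?_ <;>
      intro k hk <;> simp only [mem_Ico, mem_Ioo] at hk ⊢
    all_goals first | omega | simp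
  have hsplit : (Ioo (-(L : ℤ)) L).erase 0 = Ioo (-(L : ℤ)) 0 ∪ Ioo 0 L := by
    ext k; simp only [mem_erase, mem_union, mem_Ioo]; omega
  rw [hsplit, sum_union (disjoint_left.mpr fun k hk hk' => by simp only [mem_Ioo] at hk hk'; omega),
    ← hneg, ← hpos, ← sum_add_distrib]
  simp only [mul_add]

end Counting

theorem norm_psiNM (ψ : ℝ × ℝ → ℂ) (T τ ν : ℝ) (n m : ℕ) :
    ‖psiNM ψ T τ ν n m‖ = ‖ψ (τ + ((m : ℝ) - n) * T, ν)‖ := by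
  simp [psiNM, Complex.norm_exp]

theorem variance_cross_ambiguity_general
    {Ω : Type*} [MeasureSpace Ω]
    (L : ℕ) (T : ℝ) (τ ν : ℝ)
    (ψ : ℝ × ℝ → ℂ) (s : Fin L → Ω → ℂ)
    (hmeas : ∀ n : Fin L, Measurable (s n))
    (hindep : iIndepFun s ℙ)
    (hmean : ∀ n : Fin L, ∫ ω, s n ω ∂ℙ = 0)
    (hpseudo : ∀ n : Fin L, ∫ ω, (s n ω) ^ 2 ∂ℙ = 0)
    (hE2 : ∀ n : Fin L, ∫ ω, ‖s n ω‖ ^ 2 ∂ℙ = 1) :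
    cVar (chiC L ψ T τ ν s)
        = ∑ n ∈ Finset.Ico 1 L, ((L : ℝ) - n) *
            (‖ψ (τ - n * T, ν)‖ ^ 2 + ‖ψ (τ + n * T, ν)‖ ^ 2)
      ∧ cVar (chiC L ψ T τ ν s)
        = ∑ n ∈ (Finset.Ioo (-(L : ℤ)) (L : ℤ)).erase 0, ((L : ℝ) - |(n : ℝ)|) *
            ‖ψ (τ + n * T, ν)‖ ^ 2 := by
  have := hindep.isProbabilityMeasure
  -- `∫ ‖s n‖² = 1 ≠ 0` forces integrability: the Bochner integral is `0` otherwise.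
  have hL2 : ∀ n, MemLp (s n) 2 := fun n =>
    (memLp_two_iff_integrable_sq_norm (hmeas n).aestronglyMeasurable).mpr
      (.of_integral_ne_zero (by rw [hE2 n]; exact one_ne_zero))
  have hne : ∀ p ∈ (Finset.univ : Finset (Fin L)).offDiag, p.1 ≠ p.2 :=
    fun p hp => (Finset.mem_offDiag.mp hp).2.2
  set F : ℤ → ℝ := fun k => ‖ψ (τ + k * T, ν)‖ ^ 2
  have hvar : cVar (chiC L ψ T τ ν s)
      = ∑ k ∈ Finset.Ico 1 L, ((L : ℝ) - k) * (F (-k) + F k) := by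
    have hchi : chiC L ψ T τ ν s = fun ω => ∑ p ∈ Finset.univ.offDiag,
        s p.1 ω * conj (s p.2 ω) * psiNM ψ T τ ν p.1 p.2 :=
      funext fun ω => (Finset.sum_offDiag_eq_sum_sum_erase _ _).symm
    rw [hchi, cVar_sum_mul_of_orthonormal _
      (fun p hp => hindep.memLp_two_mul_conj_of_ne hL2 (hne p hp))
      (fun p hp => hindep.integral_mul_conj_eq_zero_of_ne hmeas hmean (hne p hp))
      (fun p hp q _ => hindep.integral_mul_conj_mul_conj_eq_ite hmeas hmean hpseudo hE2
        (hne p hp)),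
      ← sum_offDiag_fin_sub]
    exact Finset.sum_congr rfl fun p _ => by simp [F, norm_psiNM]
  refine ⟨hvar.trans (Finset.sum_congr rfl fun k _ => ?_),
    hvar.trans (sum_Ico_mul_add_eq_sum_erase_zero F L)⟩
  simp [F, sub_eq_add_neg]

/-- The variance of the cross-ambiguity part satisfies
`Var(χ_c(τ,ν)) = Σ_{n=1}^{L−1} (L − n)·(|ψ(τ − nT, ν)|² + |ψ(τ + nT, ν)|²)
              = Σ_{0 < |n| < L} (L − |n|)·|ψ(τ + nT, ν)|²`. -/
theorem variance_cross_ambiguity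
    {Ω : Type*} [MeasureSpace Ω] [IsProbabilityMeasure (ℙ : Measure Ω)]
    (L : ℕ) (hL : 1 ≤ L) (T : ℝ) (hT : 0 < T) (τ ν : ℝ)
    (ψ : ℝ × ℝ → ℂ) (s : Fin L → Ω → ℂ)
    (hmeas : ∀ n : Fin L, Measurable (s n))
    (hindep : iIndepFun s ℙ)
    (hmean : ∀ n : Fin L, ∫ ω, s n ω ∂ℙ = 0)
    (hpseudo : ∀ n : Fin L, ∫ ω, (s n ω) ^ 2 ∂ℙ = 0)
    (hE2 : ∀ n : Fin L, ∫ ω, ‖s n ω‖ ^ 2 ∂ℙ = 1)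
    (hmom4 : ∀ n : Fin L, Integrable (fun ω => ‖s n ω‖ ^ 4) ℙ) :
    cVar (chiC L ψ T τ ν s)
        = ∑ n ∈ Finset.Ico 1 L, ((L : ℝ) - n) *
            (‖ψ (τ - n * T, ν)‖ ^ 2 + ‖ψ (τ + n * T, ν)‖ ^ 2)
      ∧ cVar (chiC L ψ T τ ν s)
        = ∑ n ∈ (Finset.Ioo (-(L : ℤ)) (L : ℤ)).erase 0, ((L : ℝ) - |(n : ℝ)|) *
            ‖ψ (τ + n * T, ν)‖ ^ 2 :=
  variance_cross_ambiguity_general L T τ ν ψ s hmeas hindep hmean hpseudo hE2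
end

section
/- Under the stated assumptions, the variance of the ambiguity function decomposes additively: Var(χ(τ,ν)) = Var(χ_s(τ,ν)) + Var(χ_c(τ,ν)). -/
open MeasureTheory ProbabilityTheory Complex

/-! Since `‖x + y‖² = ‖x‖² + ‖y‖² + 2 Re (x ȳ)`, the variance is additive on uncorrelated pairs,
so it suffices that `E[χ_s conj χ_c] = E[χ_s] conj E[χ_c]`, with both sides zero. Independence
and centring give `E[s_n conj s_m] = 0` for `n ≠ m`, hence `E[χ_c] = 0`, and
`E[|s_n|² conj(s_p) s_q] = 0` for `p ≠ q`, hence `E[χ_s conj χ_c] = 0`. The fourth moments put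
every `s_n` in `L⁴`, so by Hölder all the products involved lie in `L²`. -/

open scoped ENNReal ComplexConjugate

theorem MeasureTheory.memLp_of_integrable_norm_pow {α E : Type*} [MeasurableSpace α]
    {μ : Measure α} [NormedAddCommGroup E] {f : α → E} {p : ℕ} (hf : AEStronglyMeasurable f μ)
    (hp : p ≠ 0) (hint : Integrable (fun x => ‖f x‖ ^ p) μ) : MemLp f p μ :=
  (integrable_norm_rpow_iff hf (by exact_mod_cast hp) (ENNReal.natCast_ne_top p)).1
    (by simpa only [ENNReal.toReal_natCast, Real.rpow_natCast] using hint)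

theorem MeasureTheory.MemLp.mul_of_four {α 𝕜 : Type*} [MeasurableSpace α] {μ : Measure α}
    [NormedRing 𝕜] {f g : α → 𝕜} (hf : MemLp f 4 μ) (hg : MemLp g 4 μ) :
    MemLp (fun x => f x * g x) 2 μ := by
  have : ENNReal.HolderTriple 4 4 2 := ⟨by
    rw [← two_mul, show (4 : ℝ≥0∞) = 2 * 2 by norm_num, ENNReal.mul_inv (by simp) (by simp),
      ← mul_assoc, ENNReal.mul_inv_cancel (by simp) (by simp), one_mul]⟩
  exact hg.mul' hf

theorem MeasureTheory.memLp_ofReal_norm_sq {α : Type*} [MeasurableSpace α] {μ : Measure α}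
    {f : α → ℂ} (hf : MemLp f 4 μ) : MemLp (fun x => (‖f x‖ : ℂ) ^ 2) 2 μ := by
  simp only [← Complex.mul_conj']
  exact hf.mul_of_four hf.star

theorem Complex.norm_add_sq (x y : ℂ) :
    ‖x + y‖ ^ 2 = ‖x‖ ^ 2 + ‖y‖ ^ 2 + 2 * (x * conj y).re := by
  simp only [Complex.sq_norm, Complex.normSq_add]

theorem cVar_add_of_integral_mul_conj_eq {Ω : Type*} [MeasureSpace Ω]
    [IsFiniteMeasure (ℙ : Measure Ω)] {X Y : Ω → ℂ} (hX : MemLp X 2) (hY : MemLp Y 2)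
    (hXY : ∫ ω, X ω * conj (Y ω) = (∫ ω, X ω) * conj (∫ ω, Y ω)) :
    cVar (fun ω => X ω + Y ω) = cVar X + cVar Y := by
  have hX2 : Integrable (fun ω => ‖X ω‖ ^ 2) := (memLp_two_iff_integrable_sq_norm hX.1).1 hX
  have hY2 : Integrable (fun ω => ‖Y ω‖ ^ 2) := (memLp_two_iff_integrable_sq_norm hY.1).1 hY
  have hX2Y2 : Integrable (fun ω => ‖X ω‖ ^ 2 + ‖Y ω‖ ^ 2) := hX2.add hY2
  have hXY_int : Integrable (fun ω => X ω * conj (Y ω)) := hX.integrable_mul hY.star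
  have hXY_re : Integrable (fun ω => (X ω * conj (Y ω)).re) := hXY_int.re
  have integral_re_XY : ∫ ω, (X ω * conj (Y ω)).re = (∫ ω, X ω * conj (Y ω)).re :=
    integral_re hXY_int
  simp only [cVar, Complex.norm_add_sq]
  rw [integral_add hX2Y2 (hXY_re.const_mul 2), integral_add hX2 hY2, integral_const_mul,
    integral_re_XY, hXY, integral_add (hX.integrable one_le_two) (hY.integrable one_le_two),
    Complex.norm_add_sq]
  ring

namespace ProbabilityTheory.iIndepFun

variable {Ω ι : Type*} [MeasurableSpace Ω] {μ : Measure Ω} {s : ι → Ω → ℂ}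

theorem integral_mul_conj (hindep : iIndepFun s μ) (hmeas : ∀ n, Measurable (s n))
    {n m : ι} (hnm : n ≠ m) :
    ∫ ω, s n ω * conj (s m ω) ∂μ = (∫ ω, s n ω ∂μ) * conj (∫ ω, s m ω ∂μ) := by
  rw [← integral_conj]
  exact (hindep.indepFun hnm).integral_fun_comp_mul_comp (f := id) (g := conj)
    (hmeas n).aemeasurable (hmeas m).aemeasurable
    aestronglyMeasurable_id Complex.continuous_conj.aestronglyMeasurable

theorem integral_norm_sq_mul_conj_mul_eq_zero (hindep : iIndepFun s μ)
    (hmeas : ∀ n, Measurable (s n)) {n p q : ι} (hpq : p ≠ q)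
    (hp : ∫ ω, s p ω ∂μ = 0) (hq : ∫ ω, s q ω ∂μ = 0) :
    ∫ ω, (‖s n ω‖ : ℂ) ^ 2 * conj (s p ω) * s q ω ∂μ = 0 := by
  have hφ : Continuous fun z : ℂ => (‖z‖ : ℂ) ^ 2 := by fun_prop
  -- Whichever of `s p`, `s q` differs from `s n` is independent of the remaining two factors.
  by_cases hqn : q = n
  · subst hqn
    simp_rw [mul_right_comm _ (conj (s p _))]
    rw [(hindep.indepFun hpq.symm).integral_fun_comp_mul_comp (f := fun z => (‖z‖ : ℂ) ^ 2 * z)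
      (g := conj) (hmeas q).aemeasurable (hmeas p).aemeasurable
      (hφ.mul continuous_id).aestronglyMeasurable Complex.continuous_conj.aestronglyMeasurable,
      integral_conj, hp, map_zero, mul_zero]
  · have h := (hindep.indepFun_prodMk hmeas n p q (Ne.symm hqn) hpq).integral_fun_comp_mul_comp
      (f := fun z => (‖z.1‖ : ℂ) ^ 2 * conj z.2) (g := id)
      ((hmeas n).prodMk (hmeas p)).aemeasurable (hmeas q).aemeasurable
      ((hφ.comp continuous_fst).mul
        (Complex.continuous_conj.comp continuous_snd)).aestronglyMeasurable
      aestronglyMeasurable_id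
    dsimp only [id] at h
    rw [h, hq, mul_zero]

end ProbabilityTheory.iIndepFun

section AmbiguityParts

variable {Ω : Type*} [MeasurableSpace Ω] {μ : Measure Ω} {L : ℕ} {ψ : ℝ × ℝ → ℂ} {T τ ν : ℝ}
  {s : Fin L → Ω → ℂ}

theorem memLp_chiS (hs : ∀ n, MemLp (s n) 4 μ) : MemLp (chiS L ψ T τ ν s) 2 μ :=
  memLp_finsetSum _ fun n _ => (memLp_ofReal_norm_sq (hs n)).mul_const _

theorem memLp_chiC (hs : ∀ n, MemLp (s n) 4 μ) : MemLp (chiC L ψ T τ ν s) 2 μ :=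
  memLp_finsetSum _ fun n _ => memLp_finsetSum _ fun m _ =>
    ((hs n).mul_of_four (hs m).star).mul_const _

theorem integral_chiC_eq_zero [IsFiniteMeasure μ] (hindep : iIndepFun s μ)
    (hmeas : ∀ n, Measurable (s n)) (hmean : ∀ n, ∫ ω, s n ω ∂μ = 0)
    (hs : ∀ n, MemLp (s n) 4 μ) :
    ∫ ω, chiC L ψ T τ ν s ω ∂μ = 0 := by
  have hint (n m : Fin L) :
      Integrable (fun ω => s n ω * conj (s m ω) * psiNM ψ T τ ν n m) μ :=
    (((hs n).mul_of_four (hs m).star).integrable one_le_two).mul_const _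
  simp only [chiC]
  rw [integral_finsetSum _ fun n _ => integrable_finsetSum _ fun m _ => hint n m]
  refine Finset.sum_eq_zero fun n _ => ?_
  rw [integral_finsetSum _ fun m _ => hint n m]
  refine Finset.sum_eq_zero fun m hm => ?_
  rw [integral_mul_const, hindep.integral_mul_conj hmeas (Finset.ne_of_mem_erase hm).symm,
    hmean n, zero_mul, zero_mul]

theorem integral_chiS_mul_conj_mul_eq_zero (hindep : iIndepFun s μ)
    (hmeas : ∀ n, Measurable (s n)) (hmean : ∀ n, ∫ ω, s n ω ∂μ = 0)
    (hs : ∀ n, MemLp (s n) 4 μ) {p q : Fin L} (hpq : p ≠ q) :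
    ∫ ω, chiS L ψ T τ ν s ω * (conj (s p ω) * s q ω) ∂μ = 0 := by
  have hint (n : Fin L) : Integrable
      (fun ω => psiNM ψ T τ ν n n * ((‖s n ω‖ : ℂ) ^ 2 * conj (s p ω) * s q ω)) μ := by
    have h := (memLp_ofReal_norm_sq (hs n)).integrable_mul ((hs p).star.mul_of_four (hs q))
    simpa only [Pi.mul_apply, Pi.star_apply, Complex.star_def, mul_assoc]
      using h.const_mul (psiNM ψ T τ ν n n)
  have hexpand (ω : Ω) : chiS L ψ T τ ν s ω * (conj (s p ω) * s q ω) =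
      ∑ n : Fin L, psiNM ψ T τ ν n n * ((‖s n ω‖ : ℂ) ^ 2 * conj (s p ω) * s q ω) := by
    simp only [chiS, Finset.sum_mul]
    exact Finset.sum_congr rfl fun n _ => by ring
  simp only [hexpand]
  rw [integral_finsetSum _ fun n _ => hint n]
  refine Finset.sum_eq_zero fun n _ => ?_
  rw [integral_const_mul,
    hindep.integral_norm_sq_mul_conj_mul_eq_zero hmeas hpq (hmean p) (hmean q), mul_zero]

theorem integral_chiS_mul_conj_chiC_eq_zero (hindep : iIndepFun s μ)
    (hmeas : ∀ n, Measurable (s n)) (hmean : ∀ n, ∫ ω, s n ω ∂μ = 0)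
    (hs : ∀ n, MemLp (s n) 4 μ) :
    ∫ ω, chiS L ψ T τ ν s ω * conj (chiC L ψ T τ ν s ω) ∂μ = 0 := by
  have hint (n m : Fin L) : Integrable
      (fun ω => conj (psiNM ψ T τ ν n m) * (chiS L ψ T τ ν s ω * (conj (s n ω) * s m ω))) μ :=
    ((memLp_chiS hs).integrable_mul ((hs n).star.mul_of_four (hs m))).const_mul _
  have hexpand (ω : Ω) : chiS L ψ T τ ν s ω * conj (chiC L ψ T τ ν s ω) =
      ∑ n : Fin L, ∑ m ∈ Finset.univ.erase n,
        conj (psiNM ψ T τ ν n m) * (chiS L ψ T τ ν s ω * (conj (s n ω) * s m ω)) := by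
    simp only [chiC, map_sum, map_mul, Complex.conj_conj, Finset.mul_sum]
    exact Finset.sum_congr rfl fun n _ => Finset.sum_congr rfl fun m _ => by ring
  simp only [hexpand]
  rw [integral_finsetSum _ fun n _ => integrable_finsetSum _ fun m _ => hint n m]
  refine Finset.sum_eq_zero fun n _ => ?_
  rw [integral_finsetSum _ fun m _ => hint n m]
  refine Finset.sum_eq_zero fun m hm => ?_
  rw [integral_const_mul, integral_chiS_mul_conj_mul_eq_zero hindep hmeas hmean hs
    (Finset.ne_of_mem_erase hm).symm, mul_zero]

end AmbiguityParts

theorem variance_ambiguity_additive_general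
    {Ω : Type*} [MeasureSpace Ω] [IsProbabilityMeasure (ℙ : Measure Ω)]
    (L : ℕ) (T : ℝ) (τ ν : ℝ)
    (ψ : ℝ × ℝ → ℂ) (s : Fin L → Ω → ℂ)
    (hmeas : ∀ n : Fin L, Measurable (s n))
    (hindep : iIndepFun s ℙ)
    (hmean : ∀ n : Fin L, ∫ ω, s n ω ∂ℙ = 0)
    (hmom4 : ∀ n : Fin L, Integrable (fun ω => ‖s n ω‖ ^ 4) ℙ) :
    cVar (fun ω => chiS L ψ T τ ν s ω + chiC L ψ T τ ν s ω)
      = cVar (chiS L ψ T τ ν s) + cVar (chiC L ψ T τ ν s) := by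
  have hs (n : Fin L) : MemLp (s n) 4 :=
    memLp_of_integrable_norm_pow (hmeas n).aestronglyMeasurable four_ne_zero (hmom4 n)
  refine cVar_add_of_integral_mul_conj_eq (memLp_chiS hs) (memLp_chiC hs) ?_
  rw [integral_chiS_mul_conj_chiC_eq_zero hindep hmeas hmean hs,
    integral_chiC_eq_zero hindep hmeas hmean hs, map_zero, mul_zero]

/-- The variance of the ambiguity function `χ = χ_s + χ_c` decomposes additively:
`Var(χ(τ,ν)) = Var(χ_s(τ,ν)) + Var(χ_c(τ,ν))`. -/
theorem variance_ambiguity_additive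
    {Ω : Type*} [MeasureSpace Ω] [IsProbabilityMeasure (ℙ : Measure Ω)]
    (L : ℕ) (hL : 1 ≤ L) (T : ℝ) (hT : 0 < T) (τ ν : ℝ)
    (ψ : ℝ × ℝ → ℂ) (s : Fin L → Ω → ℂ)
    (hmeas : ∀ n : Fin L, Measurable (s n))
    (hindep : iIndepFun s ℙ)
    (hmean : ∀ n : Fin L, ∫ ω, s n ω ∂ℙ = 0)
    (hpseudo : ∀ n : Fin L, ∫ ω, (s n ω) ^ 2 ∂ℙ = 0)
    (hE2 : ∀ n : Fin L, ∫ ω, ‖s n ω‖ ^ 2 ∂ℙ = 1)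
    (hmom4 : ∀ n : Fin L, Integrable (fun ω => ‖s n ω‖ ^ 4) ℙ) :
    cVar (fun ω => chiS L ψ T τ ν s ω + chiC L ψ T τ ν s ω)
      = cVar (chiS L ψ T τ ν s) + cVar (chiC L ψ T τ ν s) :=
  variance_ambiguity_additive_general L T τ ν ψ s hmeas hindep hmean hmom4
end

section
/- Let T > 0 and B > 0 satisfy 1/T ≤ B ≤ 2/T, let c > 0, and let ω ∈ L¹(ℝ, ℝ) be nonnegative almost everywhere, even (ω(f) = ω(−f) for a.e. f), and vanish almost everywhere outside [−B/2, B/2]. Then Σ_{m ∈ ℤ} ω(f + m/T) = c for almost every f ∈ ℝ if and only if: ω(f) = c for almost every f ∈ [0, 1/T − B/2], and ω(f) + ω(1/T − f) = c for almost every f ∈ [1/T − B/2, B/2]. -/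
/-!
The folded spectrum `F(x) = ∑ₘ ω(x + m/T)` is exactly `1/T`-periodic, so it suffices to look at
`x ∈ (0, 1/T)`. Since `ω` lives in `[-B/2, B/2] ⊆ [-1/T, 1/T]`, only the terms `m = 0, -1`
survive there, and by evenness `F(x) = ω(x) + ω(1/T - x)`. On `(0, 1/T - B/2)` the second term
vanishes, on `(B/2, 1/T)` the first does, and the latter interval is the mirror image of the former
under `x ↦ 1/T - x`; what remains is the overlap band `(1/T - B/2, B/2)`.
-/

open MeasureTheory Set

theorem ae_comp_add_right {p : ℝ → Prop} (h : ∀ᵐ x : ℝ, p x) (c : ℝ) : ∀ᵐ x : ℝ, p (x + c) :=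
  (measurePreserving_add_right volume c).quasiMeasurePreserving.ae h

theorem ae_comp_sub_right {p : ℝ → Prop} (h : ∀ᵐ x : ℝ, p x) (c : ℝ) : ∀ᵐ x : ℝ, p (x - c) :=
  (measurePreserving_sub_right volume c).quasiMeasurePreserving.ae h

theorem ae_comp_const_sub {p : ℝ → Prop} (h : ∀ᵐ x : ℝ, p x) (c : ℝ) : ∀ᵐ x : ℝ, p (c - x) :=
  (Measure.measurePreserving_sub_left volume c).quasiMeasurePreserving.ae h

theorem ae_mem_Icc_imp_iff_ae_mem_Ioo {p : ℝ → Prop} {a b : ℝ} :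
    (∀ᵐ x : ℝ, x ∈ Icc a b → p x) ↔ ∀ᵐ x : ℝ, x ∈ Ioo a b → p x := by
  rw [← ae_restrict_iff' measurableSet_Icc, ← ae_restrict_iff' measurableSet_Ioo,
    Measure.restrict_congr_set Ioo_ae_eq_Icc]

theorem Function.Periodic.ae_iff_ae_mem_Ioo {α : Type*} {F : ℝ → α} {a : ℝ}
    (hF : Function.Periodic F a) (ha : 0 < a) {p : α → Prop} :
    (∀ᵐ x : ℝ, p (F x)) ↔ ∀ᵐ x : ℝ, x ∈ Ioo 0 a → p (F x) := by
  refine ⟨fun h => h.mono fun x hx _ => hx, fun h => ?_⟩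
  have htrans : ∀ᵐ x : ℝ, ∀ n : ℤ, x - n • a ∈ Ioo 0 a → p (F (x - n • a)) :=
    ae_all_iff.2 fun n => ae_comp_sub_right h (n • a)
  have hne : ∀ᵐ x : ℝ, ∀ n : ℤ, x ≠ n • a := ae_all_iff.2 fun n => Measure.ae_ne volume _
  filter_upwards [htrans, hne] with x hx hxne
  rw [← hF.sub_zsmul_eq (toIcoDiv ha 0 x)]
  obtain ⟨hlo, hhi⟩ := toIcoMod_mem_Ico' ha x
  rw [← self_sub_toIcoDiv_zsmul] at hlo hhi
  exact hx _ ⟨hlo.lt_of_ne (sub_ne_zero.2 (hxne _)).symm, hhi⟩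

section Folding

variable {M : Type*} [AddCommMonoid M] [TopologicalSpace M]

noncomputable def foldedSum (ω : ℝ → M) (a x : ℝ) : M :=
  ∑' m : ℤ, ω (x + m * a)

theorem foldedSum_periodic (ω : ℝ → M) (a : ℝ) : Function.Periodic (foldedSum ω a) a := by
  intro x
  unfold foldedSum
  conv_rhs => rw [← (Equiv.addRight (1 : ℤ)).tsum_eq]
  refine tsum_congr fun m => congrArg ω ?_
  push_cast [Equiv.coe_addRight]
  ring

theorem foldedSum_eq_add_of_mem_Ioo {ω : ℝ → M} {a b x : ℝ} (hba : b ≤ a) (hx : x ∈ Ioo 0 a)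
    (hω : ∀ m : ℤ, x + m * a ∉ Icc (-b) b → ω (x + m * a) = 0) :
    foldedSum ω a x = ω x + ω (x - a) := by
  have hvanish : ∀ m ∉ ({0, -1} : Finset ℤ), ω (x + m * a) = 0 := by
    intro m hm
    simp only [Finset.mem_insert, Finset.mem_singleton, not_or] at hm
    refine hω m fun hmem => ?_
    rcases lt_or_gt_of_ne hm.1 with hneg | hpos
    · have : (m : ℝ) ≤ -2 := by exact_mod_cast (show m ≤ -2 by omega)
      nlinarith [hmem.1, hx.1, hx.2]
    · have : (1 : ℝ) ≤ m := by exact_mod_cast hpos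
      nlinarith [hmem.2, hx.1, hx.2]
  rw [foldedSum, tsum_eq_sum hvanish, Finset.sum_pair (by decide)]
  push_cast
  ring_nf

theorem ae_foldedSum_eq_add_reflect {ω : ℝ → M} {a b : ℝ} (hba : b ≤ a)
    (heven : ∀ᵐ x : ℝ, ω x = ω (-x)) (hsupp : ∀ᵐ x : ℝ, x ∉ Icc (-b) b → ω x = 0) :
    ∀ᵐ x : ℝ, x ∈ Ioo 0 a → foldedSum ω a x = ω x + ω (a - x) := by
  have htrans : ∀ᵐ x : ℝ, ∀ m : ℤ, x + m * a ∉ Icc (-b) b → ω (x + m * a) = 0 :=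
    ae_all_iff.2 fun m => ae_comp_add_right hsupp _
  have hreflect : ∀ᵐ x : ℝ, ω (x - a) = ω (a - x) := by
    filter_upwards [ae_comp_sub_right heven a] with x hx
    rwa [neg_sub] at hx
  filter_upwards [htrans, hreflect] with x hx hxa hmem
  rw [foldedSum_eq_add_of_mem_Ioo hba hmem hx, hxa]

end Folding

theorem ae_add_reflect_eq_iff {M : Type*} [AddCommMonoid M] {ω : ℝ → M} {a b : ℝ} {c : M}
    (hba : b ≤ a) (hab : a - b ≤ b) (hsupp : ∀ᵐ x : ℝ, x ∉ Icc (-b) b → ω x = 0) :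
    (∀ᵐ x : ℝ, x ∈ Ioo 0 a → ω x + ω (a - x) = c) ↔
      (∀ᵐ x : ℝ, x ∈ Ioo 0 (a - b) → ω x = c) ∧
        ∀ᵐ x : ℝ, x ∈ Ioo (a - b) b → ω x + ω (a - x) = c := by
  have hsupp' := ae_comp_const_sub hsupp a
  constructor
  · intro h
    constructor
    · filter_upwards [h, hsupp'] with x hx hx' hmem
      rw [← hx ⟨hmem.1, by linarith [hmem.2]⟩, hx' fun h' => by linarith [h'.2, hmem.2], add_zero]
    · filter_upwards [h] with x hx hmem
      exact hx ⟨by linarith [hmem.1], by linarith [hmem.2]⟩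
  · rintro ⟨hlow, hmid⟩
    filter_upwards [hlow, hmid, ae_comp_const_sub hlow a, hsupp, hsupp',
      Measure.ae_ne volume (a - b), Measure.ae_ne volume b] with x hl hm hl' hs hs' hne₁ hne₂ hx
    rcases hne₁.lt_or_gt with h₁ | h₁
    · rw [hl ⟨hx.1, h₁⟩, hs' fun h' => by linarith [h'.2], add_zero]
    rcases hne₂.lt_or_gt with h₂ | h₂
    · exact hm ⟨h₁, h₂⟩
    · rw [hs fun h' => by linarith [h'.2], hl' ⟨by linarith [hx.2], by linarith⟩, zero_add]

theorem folded_spectrum_constant_iff_bandlimited_conditions_general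
    (T B c : ℝ) (hT : 0 < T)
    (hB1 : 1 / T ≤ B) (hB2 : B ≤ 2 / T)
    (ω : ℝ → ℝ)
    (heven : ∀ᵐ f : ℝ, ω f = ω (-f))
    (hsupp : ∀ᵐ f : ℝ, f ∉ Set.Icc (-(B / 2)) (B / 2) → ω f = 0) :
    (∀ᵐ f : ℝ, (∑' m : ℤ, ω (f + m / T)) = c)
      ↔ ((∀ᵐ f : ℝ, f ∈ Set.Icc 0 (1 / T - B / 2) → ω f = c)
          ∧ (∀ᵐ f : ℝ, f ∈ Set.Icc (1 / T - B / 2) (B / 2) → ω f + ω (1 / T - f) = c)) := by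
  have hperiod : 0 < 1 / T := by positivity
  have hba : B / 2 ≤ 1 / T := by linarith [show 2 / T = 2 * (1 / T) by ring]
  have hab : 1 / T - B / 2 ≤ B / 2 := by linarith
  calc (∀ᵐ f : ℝ, (∑' m : ℤ, ω (f + m / T)) = c)
      ↔ ∀ᵐ f : ℝ, foldedSum ω (1 / T) f = c := by simp only [foldedSum, mul_one_div]
    _ ↔ ∀ᵐ f : ℝ, f ∈ Ioo 0 (1 / T) → foldedSum ω (1 / T) f = c :=
      (foldedSum_periodic ω _).ae_iff_ae_mem_Ioo (p := (· = c)) hperiod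
    _ ↔ ∀ᵐ f : ℝ, f ∈ Ioo 0 (1 / T) → ω f + ω (1 / T - f) = c :=
      Filter.eventually_congr <| (ae_foldedSum_eq_add_reflect hba heven hsupp).mono
        fun f hf => imp_congr_right fun hmem => by rw [hf hmem]
    _ ↔ _ := by
      rw [ae_add_reflect_eq_iff hba hab hsupp, ae_mem_Icc_imp_iff_ae_mem_Ioo,
        ae_mem_Icc_imp_iff_ae_mem_Ioo]

/-- Recast of the constant folded-spectrum (Nyquist) criterion for a strictly band-limited,
even, nonnegative energy spectral density `ω` supported in `[−B/2, B/2]` with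
`1/T ≤ B ≤ 2/T`: the folded spectrum `Σ_m ω(f + m/T)` is a.e. equal to the constant `c`
if and only if `ω(f) = c` for a.e. `f ∈ [0, 1/T − B/2]` and
`ω(f) + ω(1/T − f) = c` for a.e. `f ∈ [1/T − B/2, B/2]`. -/
theorem folded_spectrum_constant_iff_bandlimited_conditions
    (T B c : ℝ) (hT : 0 < T) (hB : 0 < B)
    (hB1 : 1 / T ≤ B) (hB2 : B ≤ 2 / T) (hc : 0 < c)
    (ω : ℝ → ℝ) (hω1 : Integrable ω (volume : Measure ℝ))
    (hω0 : ∀ᵐ f : ℝ, 0 ≤ ω f)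
    (heven : ∀ᵐ f : ℝ, ω f = ω (-f))
    (hsupp : ∀ᵐ f : ℝ, f ∉ Set.Icc (-(B / 2)) (B / 2) → ω f = 0) :
    (∀ᵐ f : ℝ, (∑' m : ℤ, ω (f + m / T)) = c)
      ↔ ((∀ᵐ f : ℝ, f ∈ Set.Icc 0 (1 / T - B / 2) → ω f = c)
          ∧ (∀ᵐ f : ℝ, f ∈ Set.Icc (1 / T - B / 2) (B / 2) → ω f + ω (1 / T - f) = c)) :=
  folded_spectrum_constant_iff_bandlimited_conditions_general T B c hT hB1 hB2 ω heven hsupp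
end

section
/- Under the stated assumptions, if additionally the pulse has unit energy and zero inter-symbol interference, i.e. ψ(0, 0) = 1 and ψ(nT, 0) = 0 for every integer n with 0 < |n| < L, then the mean squared energy of the frame signal satisfies E[|χ(0, 0)|²] = L·(μ₄ − 1) + L². -/
/-!
Zero inter-symbol interference kills every off-diagonal term of `χ(0,0)`, and unit energy turns
the diagonal into `Σₙ |sₙ|²`, so `χ(0,0)` is real. The energies `|sₙ|²` are independent with mean
`1` and second moment `μ₄`, so expanding the square gives `L` diagonal terms `μ₄` and `L² − L`
off-diagonal terms `1`.
-/

open MeasureTheory ProbabilityTheory Complex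

/-- The ambiguity function of the frame signal at the origin:
`χ(0,0) = Σ_n Σ_m s_n conj(s_m) ψ((m−n)T, 0)`. -/
noncomputable def chiZero {Ω : Type*} (L : ℕ) (ψ : ℝ × ℝ → ℂ) (T : ℝ)
    (s : Fin L → Ω → ℂ) (ω : Ω) : ℂ :=
  ∑ n : Fin L, ∑ m : Fin L, s n ω * (starRingEnd ℂ) (s m ω) * ψ (((m : ℝ) - (n : ℝ)) * T, 0)

section SumOfIndependent

variable {ι Ω : Type*} [MeasurableSpace Ω] {μ : Measure Ω} {g : ι → Ω → ℝ} {a b : ℝ}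

lemma integral_mul_eq_ite_of_pairwise_indepFun [DecidableEq ι]
    (hindep : Pairwise fun i j => g i ⟂ᵢ[μ] g j) (hmeas : ∀ i, AEStronglyMeasurable (g i) μ)
    (hmean : ∀ i, ∫ ω, g i ω ∂μ = a) (hsq : ∀ i, ∫ ω, g i ω ^ 2 ∂μ = b) (i j : ι) :
    ∫ ω, g i ω * g j ω ∂μ = if i = j then b else a ^ 2 := by
  rcases eq_or_ne i j with rfl | hij
  · simpa [← sq] using hsq i
  · have h := (hindep hij).integral_mul_eq_mul_integral (hmeas i) (hmeas j)
    rw [hmean, hmean] at h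
    rw [if_neg hij, sq]
    exact h

lemma integral_sq_sum_of_pairwise_indepFun [Fintype ι] [IsFiniteMeasure μ]
    (hindep : Pairwise fun i j => g i ⟂ᵢ[μ] g j) (hmeas : ∀ i, AEStronglyMeasurable (g i) μ)
    (hint : ∀ i, Integrable (fun ω => g i ω ^ 2) μ)
    (hmean : ∀ i, ∫ ω, g i ω ∂μ = a) (hsq : ∀ i, ∫ ω, g i ω ^ 2 ∂μ = b) :
    ∫ ω, (∑ i, g i ω) ^ 2 ∂μ = Fintype.card ι * (b - a ^ 2) + (Fintype.card ι * a) ^ 2 := by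
  have hL2 : ∀ i, MemLp (g i) 2 μ := fun i => (memLp_two_iff_integrable_sq (hmeas i)).2 (hint i)
  have hprod : ∀ i j, Integrable (fun ω => g i ω * g j ω) μ := fun i j =>
    (hL2 i).integrable_mul (hL2 j)
  classical
  calc ∫ ω, (∑ i, g i ω) ^ 2 ∂μ
      = ∫ ω, ∑ i, ∑ j, g i ω * g j ω ∂μ := by simp only [sq, Finset.sum_mul_sum]
    _ = ∑ i, ∑ j, ∫ ω, g i ω * g j ω ∂μ := by
        rw [integral_finsetSum _ fun i _ => integrable_finsetSum _ fun j _ => hprod i j]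
        exact Finset.sum_congr rfl fun i _ => integral_finsetSum _ fun j _ => hprod i j
    _ = ∑ i : ι, ∑ j : ι, (a ^ 2 + if i = j then b - a ^ 2 else 0) := by
        simp only [integral_mul_eq_ite_of_pairwise_indepFun hindep hmeas hmean hsq]
        refine Finset.sum_congr rfl fun i _ => Finset.sum_congr rfl fun j _ => ?_
        split_ifs <;> ring
    _ = Fintype.card ι * (b - a ^ 2) + (Fintype.card ι * a) ^ 2 := by
        simp only [Finset.sum_add_distrib, Finset.sum_ite_eq, Finset.mem_univ, if_true,
          Finset.sum_const, Finset.card_univ, nsmul_eq_mul]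
        ring

end SumOfIndependent

lemma psi_eq_zero_of_ne {L : ℕ} {T : ℝ} {ψ : ℝ × ℝ → ℂ}
    (hISI : ∀ n : ℤ, 0 < |n| → |n| < (L : ℤ) → ψ ((n : ℝ) * T, 0) = 0)
    {n m : Fin L} (hnm : m ≠ n) : ψ (((m : ℝ) - (n : ℝ)) * T, 0) = 0 := by
  have hcast : (m : ℝ) - (n : ℝ) = (((m : ℤ) - (n : ℤ) : ℤ) : ℝ) := by push_cast; ring
  rw [hcast]
  apply hISI
  · exact abs_pos.mpr (sub_ne_zero.mpr (by exact_mod_cast Fin.val_ne_of_ne hnm))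
  · rw [abs_sub_lt_iff]
    omega

lemma chiZero_eq_sum_sq_norm {Ω : Type*} {L : ℕ} {T : ℝ} {ψ : ℝ × ℝ → ℂ}
    (hunit : ψ (0, 0) = 1)
    (hISI : ∀ n : ℤ, 0 < |n| → |n| < (L : ℤ) → ψ ((n : ℝ) * T, 0) = 0)
    (s : Fin L → Ω → ℂ) (ω : Ω) :
    chiZero L ψ T s ω = ((∑ n, ‖s n ω‖ ^ 2 : ℝ) : ℂ) := by
  rw [chiZero]
  push_cast
  refine Finset.sum_congr rfl fun n _ => ?_
  rw [Finset.sum_eq_single_of_mem n (Finset.mem_univ n)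
    fun m _ hmn => by rw [psi_eq_zero_of_ne hISI hmn, mul_zero], sub_self, zero_mul, hunit, mul_one, mul_conj, normSq_eq_norm_sq, ofReal_pow]

theorem mean_squared_energy_general
    {Ω : Type*} [MeasureSpace Ω] [IsProbabilityMeasure (ℙ : Measure Ω)]
    (L : ℕ) (T : ℝ)
    (ψ : ℝ × ℝ → ℂ) (s : Fin L → Ω → ℂ) (μ₄ : ℝ)
    (hmeas : ∀ n : Fin L, Measurable (s n))
    (hindep : iIndepFun s ℙ)
    (hE2 : ∀ n : Fin L, ∫ ω, ‖s n ω‖ ^ 2 ∂ℙ = 1)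
    (hmom4 : ∀ n : Fin L, Integrable (fun ω => ‖s n ω‖ ^ 4) ℙ)
    (hE4 : ∀ n : Fin L, ∫ ω, ‖s n ω‖ ^ 4 ∂ℙ = μ₄)
    (hunit : ψ (0, 0) = 1)
    (hISI : ∀ n : ℤ, 0 < |n| → |n| < (L : ℤ) → ψ ((n : ℝ) * T, 0) = 0) :
    (∫ ω, ‖chiZero L ψ T s ω‖ ^ 2 ∂ℙ) = L * (μ₄ - 1) + (L : ℝ) ^ 2 := by
  have hpow : ∀ x : ℝ, (x ^ 2) ^ 2 = x ^ 4 := fun x => by ring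
  have henergy_indep : iIndepFun (fun n ω => ‖s n ω‖ ^ 2) ℙ :=
    hindep.comp (fun _ z => ‖z‖ ^ 2) fun _ => measurable_norm.pow_const 2
  have hmoments := integral_sq_sum_of_pairwise_indepFun (μ := ℙ) (a := 1) (b := μ₄)
    (fun _ _ h => henergy_indep.indepFun h)
    (fun n => ((hmeas n).norm.pow_const 2).aestronglyMeasurable)
    (by simpa only [hpow] using hmom4) hE2 (by simpa only [hpow] using hE4)
  simp only [chiZero_eq_sum_sq_norm hunit hISI, norm_real, Real.norm_eq_abs, sq_abs]
  simpa [Fintype.card_fin] using hmoments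

/-- If the pulse has unit energy (`ψ(0,0) = 1`) and zero inter-symbol interference
(`ψ(nT,0) = 0` for `0 < |n| < L`), then the mean squared energy of the frame signal is
`E[|χ(0,0)|²] = L(μ₄ − 1) + L²`. -/
theorem mean_squared_energy
    {Ω : Type*} [MeasureSpace Ω] [IsProbabilityMeasure (ℙ : Measure Ω)]
    (L : ℕ) (hL : 1 ≤ L) (T : ℝ) (hT : 0 < T)
    (ψ : ℝ × ℝ → ℂ) (s : Fin L → Ω → ℂ) (μ₄ : ℝ) (hμ₄ : 1 ≤ μ₄)
    (hmeas : ∀ n : Fin L, Measurable (s n))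
    (hindep : iIndepFun s ℙ)
    (hmean : ∀ n : Fin L, ∫ ω, s n ω ∂ℙ = 0)
    (hpseudo : ∀ n : Fin L, ∫ ω, (s n ω) ^ 2 ∂ℙ = 0)
    (hE2 : ∀ n : Fin L, ∫ ω, ‖s n ω‖ ^ 2 ∂ℙ = 1)
    (hmom4 : ∀ n : Fin L, Integrable (fun ω => ‖s n ω‖ ^ 4) ℙ)
    (hE4 : ∀ n : Fin L, ∫ ω, ‖s n ω‖ ^ 4 ∂ℙ = μ₄)
    (hunit : ψ (0, 0) = 1)
    (hISI : ∀ n : ℤ, 0 < |n| → |n| < (L : ℤ) → ψ ((n : ℝ) * T, 0) = 0) :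
    (∫ ω, ‖chiZero L ψ T s ω‖ ^ 2 ∂ℙ) = L * (μ₄ - 1) + (L : ℝ) ^ 2 :=
  mean_squared_energy_general L T ψ s μ₄ hmeas hindep hE2 hmom4 hE4 hunit hISI
end
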